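/- arXiv:2405.00442 — 2 statements merged into one kernel-verified Lean document; each statement's English description precedes it below -/
import Mathlib

section
/- The focal loss is bounded below by the cross-entropy minus γ times the entropy: for probability vectors p, q on a finite set Y with p(y) > 0 for all y, and γ ≥ 1, we have -∑_y q(y)(1-p(y))^γ ln p(y) ≥ -∑_y q(y) ln p(y) - γ ∑_y (-p(y) ln p(y)). -/
open Real Finset

theorem focal_loss_lower_bound {Y : Type*} [Fintype Y] (p q : Y → ℝ) (γ : ℝ)
    (hp0 : ∀ y, 0 < p y) (hp1 : ∀ y, p y ≤ 1) (hpsum : ∑ y, p y = 1)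
    (hq0 : ∀ y, 0 ≤ q y) (hq1 : ∀ y, q y ≤ 1) (hqsum : ∑ y, q y = 1)
    (hγ : 1 ≤ γ) :
    -∑ y, q y * (1 - p y) ^ γ * Real.log (p y) ≥
      (-∑ y, q y * Real.log (p y)) - γ * ∑ y, (-(p y * Real.log (p y))) := by
  have key : ∀ y, q y * (1 - p y) ^ γ * Real.log (p y) ≤
      q y * Real.log (p y) - γ * (p y * Real.log (p y)) := by
    intro y
    have hL : Real.log (p y) ≤ 0 := Real.log_nonpos (hp0 y).le (hp1 y)
    set L : ℝ := -Real.log (p y) with hLdef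
    have hL0 : 0 ≤ L := by simp [hLdef]; linarith
    have hb0 : (0:ℝ) ≤ 1 - p y := by linarith [hp1 y]
    have hb1 : (1 - p y : ℝ) ≤ 1 := by linarith [(hp0 y).le]
    have hber : 1 - γ * p y ≤ (1 - p y) ^ γ := by
      have := one_add_mul_self_le_rpow_one_add (s := -p y)
        (by linarith [hp1 y]) hγ
      have h1 : 1 + γ * -p y ≤ (1 + -p y) ^ γ := this
      rw [show (1 + -p y) = 1 - p y by ring] at h1
      linarith
    have hpow1 : (1 - p y) ^ γ ≤ 1 := Real.rpow_le_one hb0 hb1 (by linarith)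
    have hmain : q y * (1 - (1 - p y) ^ γ) * L ≤ γ * p y * L := by
      apply mul_le_mul_of_nonneg_right _ hL0
      calc q y * (1 - (1 - p y) ^ γ) ≤ 1 * (1 - (1 - p y) ^ γ) :=
        mul_le_mul_of_nonneg_right (hq1 y) (by linarith)
      _ = 1 - (1 - p y) ^ γ := one_mul _
      _ ≤ γ * p y := by linarith
    have : Real.log (p y) = -L := by simp [hLdef]
    rw [this]; nlinarith [hmain]
  have hsum : ∑ y, q y * (1 - p y) ^ γ * Real.log (p y) ≤
      ∑ y, (q y * Real.log (p y) - γ * (p y * Real.log (p y))) :=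
    Finset.sum_le_sum fun y _ => key y
  rw [Finset.sum_sub_distrib, ← Finset.mul_sum] at hsum
  have : ∑ y, -(p y * Real.log (p y)) = -∑ y, p y * Real.log (p y) := by
    simp
  rw [ge_iff_le, this]
  linarith
end

section
/- Existence and uniqueness of the Boltzmann temperature: for a finite set Θ, non-constant L : Θ → ℝ, and any δ with min_θ L(θ) < δ < max_θ L(θ), there exists a unique β ∈ ℝ such that ∑_θ L(θ)e^{-βL(θ)} = δ · ∑_θ e^{-βL(θ)}. -/
open Real Finset

theorem boltzmann_temperature_exists_unique {Θ : Type*} [Fintype Θ] [Nonempty Θ]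
    (L : Θ → ℝ) (hL : ∃ a b : Θ, L a ≠ L b) (δ : ℝ)
    (hδ₁ : Finset.univ.inf' Finset.univ_nonempty L < δ)
    (hδ₂ : δ < Finset.univ.sup' Finset.univ_nonempty L) :
    ∃! β : ℝ, ∑ θ, L θ * Real.exp (-β * L θ) = δ * ∑ θ, Real.exp (-β * L θ) := by
  classical
  set c : Θ → ℝ := fun θ => L θ - δ with hc
  set g : ℝ → ℝ := fun β => ∑ θ, c θ * Real.exp (-β * c θ) with hg
  obtain ⟨θ₀, -, hθ₀⟩ := Finset.exists_mem_eq_sup' Finset.univ_nonempty L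
  obtain ⟨θ₁, -, hθ₁⟩ := Finset.exists_mem_eq_inf' Finset.univ_nonempty L
  have hM : 0 < c θ₀ := by simp only [hc]; linarith [hθ₀ ▸ hδ₂]
  have hm : c θ₁ < 0 := by simp only [hc]; linarith [hθ₁ ▸ hδ₁]
  have hmle : ∀ θ, c θ₁ ≤ c θ := fun θ => by
    have h := Finset.inf'_le L (Finset.mem_univ θ)
    rw [Finset.inf'_congr Finset.univ_nonempty rfl (fun _ _ => rfl)] at h
    simp only [hc]; linarith [hθ₁ ▸ h]
  have hMge : ∀ θ, c θ ≤ c θ₀ := fun θ => by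
    have h := Finset.le_sup' L (Finset.mem_univ θ)
    simp only [hc]; linarith [hθ₀ ▸ h]
  -- equivalence of the equation with g β = 0
  have key : ∀ β : ℝ, (∑ θ, L θ * Real.exp (-β * L θ) = δ * ∑ θ, Real.exp (-β * L θ))
      ↔ g β = 0 := by
    intro β
    have hgβ : g β = Real.exp (β * δ) *
        (∑ θ, L θ * Real.exp (-β * L θ) - δ * ∑ θ, Real.exp (-β * L θ)) := by
      simp only [hg, hc]
      simp only [Finset.mul_sum, ← Finset.sum_sub_distrib]
      refine Finset.sum_congr rfl fun θ _ => ?_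
      rw [show -β * (L θ - δ) = β * δ + -β * L θ by ring, Real.exp_add]
      ring
    constructor
    · intro h; rw [hgβ, h]; ring
    · intro h
      rw [hgβ, mul_eq_zero] at h
      rcases h with h | h
      · exact absurd h (Real.exp_ne_zero _)
      · linarith
  -- continuity
  have hcont : Continuous g := by
    apply continuous_finset_sum
    intro θ _
    exact continuous_const.mul ((continuous_neg.mul continuous_const).rexp)
  -- g tends to atTop at atBot
  have htop : Filter.Tendsto g Filter.atBot Filter.atTop := by
    have hlow : ∀ β : ℝ, β ≤ 0 →
        c θ₀ * Real.exp (-β * c θ₀) + ∑ θ ∈ Finset.univ.erase θ₀, c θ₁ ≤ g β := by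
      intro β hβ
      have : g β = c θ₀ * Real.exp (-β * c θ₀) +
          ∑ θ ∈ Finset.univ.erase θ₀, c θ * Real.exp (-β * c θ) := by
        simp only [hg]
        rw [← Finset.add_sum_erase _ _ (Finset.mem_univ θ₀)]
      rw [this]
      gcongr with θ hθ
      rcases le_or_gt (c θ) 0 with h | h
      · calc c θ₁ ≤ c θ := hmle θ
          _ = c θ * 1 := (mul_one _).symm
          _ ≤ c θ * Real.exp (-β * c θ) := by
              rcases eq_or_lt_of_le h with h0 | h0
              · simp [h0]
              · have : Real.exp (-β * c θ) ≤ 1 := by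
                  rw [Real.exp_le_one_iff]
                  nlinarith
                nlinarith [Real.exp_pos (-β * c θ)]
      · have := Real.exp_pos (-β * c θ)
        nlinarith [hmle θ, hm]
    have hbase : Filter.Tendsto
        (fun β : ℝ => c θ₀ * Real.exp (-β * c θ₀) + ∑ θ ∈ Finset.univ.erase θ₀, c θ₁)
        Filter.atBot Filter.atTop := by
      apply Filter.tendsto_atTop_add_const_right
      apply Filter.Tendsto.const_mul_atTop hM
      apply Real.tendsto_exp_atTop.comp
      exact (Filter.tendsto_neg_atBot_atTop).atTop_mul_const hM
    refine Filter.tendsto_atTop_mono' _ ?_ hbase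
    filter_upwards [Filter.eventually_le_atBot (0 : ℝ)] with β hβ using hlow β hβ
  -- g tends to atBot at atTop
  have hbot : Filter.Tendsto g Filter.atTop Filter.atBot := by
    have hupp : ∀ β : ℝ, 0 ≤ β →
        g β ≤ c θ₁ * Real.exp (-β * c θ₁) + ∑ θ ∈ Finset.univ.erase θ₁, c θ₀ := by
      intro β hβ
      have : g β = c θ₁ * Real.exp (-β * c θ₁) +
          ∑ θ ∈ Finset.univ.erase θ₁, c θ * Real.exp (-β * c θ) := by
        simp only [hg]
        rw [← Finset.add_sum_erase _ _ (Finset.mem_univ θ₁)]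
      rw [this]
      gcongr with θ hθ
      rcases le_or_gt (c θ) 0 with h | h
      · have := Real.exp_pos (-β * c θ)
        nlinarith [hMge θ, hM]
      · calc c θ * Real.exp (-β * c θ) ≤ c θ * 1 := by
              have : Real.exp (-β * c θ) ≤ 1 := by
                rw [Real.exp_le_one_iff]; nlinarith
              nlinarith
          _ = c θ := mul_one _
          _ ≤ c θ₀ := hMge θ
    have hbase : Filter.Tendsto
        (fun β : ℝ => c θ₁ * Real.exp (-β * c θ₁) + ∑ θ ∈ Finset.univ.erase θ₁, c θ₀)
        Filter.atTop Filter.atBot := by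
      apply Filter.tendsto_atBot_add_const_right
      apply Filter.Tendsto.const_mul_atTop_of_neg hm
      apply Real.tendsto_exp_atTop.comp
      have : Filter.Tendsto (fun β : ℝ => β * (-c θ₁)) Filter.atTop Filter.atTop :=
        Filter.tendsto_id.atTop_mul_const (by linarith)
      refine this.congr fun β => by ring
    refine Filter.tendsto_atBot_mono' _ ?_ hbase
    filter_upwards [Filter.eventually_ge_atTop (0 : ℝ)] with β hβ using hupp β hβ
  -- strict antitonicity
  have hanti : StrictAnti g := by
    apply strictAnti_of_deriv_neg
    intro β
    have hderiv : HasDerivAt g (∑ θ, c θ * (Real.exp (-β * c θ) * (-1 * c θ))) β := by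
      apply HasDerivAt.fun_sum
      intro θ _
      exact (((hasDerivAt_id β).neg.mul_const (c θ)).exp).const_mul (c θ)
    rw [hderiv.deriv]
    have hlt : (∑ θ, c θ * (Real.exp (-β * c θ) * (-1 * c θ))) < ∑ _θ : Θ, (0:ℝ) := by
      apply Finset.sum_lt_sum
      · intro θ _
        nlinarith [mul_nonneg (sq_nonneg (c θ)) (Real.exp_pos (-β * c θ)).le]
      · exact ⟨θ₀, Finset.mem_univ _, by
          nlinarith [mul_pos (pow_pos hM 2) (Real.exp_pos (-β * c θ₀))]⟩
    simpa using hlt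
  obtain ⟨β, hβ⟩ := (hcont.surjective' htop hbot) 0
  exact ⟨β, (key β).mpr hβ,
    fun β' hβ' => hanti.injective (((key β').mp hβ').trans hβ.symm)⟩
end
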